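/- Let f = x_i^{u_i} x_j^{u_j} − x_k^{u_k} x_l^{u_l} be a primitive binomial of I_A with i, j, k, l pairwise distinct, 0 < u_i < c_i and 0 < u_k < c_k. If the A-degree u_i a_i + u_j a_j of f is minimal among the A-degrees of all primitive binomials of I_A (i.e., u_i a_i + u_j a_j ≤ deg_A(g) for every primitive binomial g of I_A), then f is an indispensable binomial of J = I_A ∩ k[x_i,x_j,x_k,x_l]. -/

import Mathlib

open MvPolynomial Finsupp

variable (K : Type*) [Field K]

/-- The `A`-degree of an exponent vector `u ∈ ℕ^n` with respect to `a_1, …, a_n ∈ ℕ`, namely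
`∑ i, u i * a i`. -/
def degN {n : ℕ} (a : Fin n → ℕ) (u : Fin n →₀ ℕ) : ℕ :=
  ∑ i, u i * a i

/-- The defining ideal `I_A` of the monomial curve `x_i = t^{a_i}`: the ideal generated by all
binomials `x^u - x^v` with `∑ u_i a_i = ∑ v_i a_i` (equivalently, the kernel of
`k[x_1,…,x_n] → k[t]`, `x_i ↦ t^{a_i}`). -/
noncomputable def curveIdeal {n : ℕ} (a : Fin n → ℕ) : Ideal (MvPolynomial (Fin n) K) :=
  Ideal.span { f | ∃ u v : Fin n →₀ ℕ, degN a u = degN a v ∧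
    f = monomial u (1 : K) - monomial v (1 : K) }

/-- `c` is the critical exponent of the variable `x_i`: the least positive integer `c` with
`c * a_i ∈ ∑_{j ≠ i} ℕ a_j`. -/
def IsCritExp {n : ℕ} (a : Fin n → ℕ) (i : Fin n) (c : ℕ) : Prop :=
  IsLeast { m : ℕ | 0 < m ∧ ∃ u : Fin n →₀ ℕ, u i = 0 ∧ m * a i = degN a u } c

/-- `f` is a critical binomial of `I_A` with respect to `x_i` (where `c` is the vector of
critical exponents): `f = x_i^{c_i} - ∏_{j ≠ i} x_j^{u_{ij}} ∈ I_A`. -/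
def IsCritBinom {n : ℕ} (a c : Fin n → ℕ) (i : Fin n) (f : MvPolynomial (Fin n) K) : Prop :=
  ∃ u : Fin n →₀ ℕ, u i = 0 ∧
    f = monomial (Finsupp.single i (c i)) (1 : K) - monomial u (1 : K) ∧
    f ∈ curveIdeal K a

/-- The critical ideal `C_A`: the ideal generated by all critical binomials of `I_A`. -/
noncomputable def criticalIdeal {n : ℕ} (a c : Fin n → ℕ) :
    Ideal (MvPolynomial (Fin n) K) :=
  Ideal.span { f | ∃ i : Fin n, IsCritBinom K a c i f }

/-- `S` is a set of binomials generating `J`. -/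
def IsBinomGenSet {σ : Type*} (J : Ideal (MvPolynomial σ K)) (S : Set (MvPolynomial σ K)) :
    Prop :=
  (∀ f ∈ S, ∃ u v : σ →₀ ℕ, f = monomial u (1 : K) - monomial v (1 : K)) ∧
  Ideal.span S = J

/-- The monomial `x^u` is an indispensable monomial of `J`: every set of binomials generating `J`
contains a binomial one of whose monomials is `x^u`. -/
def IndispMonomial {σ : Type*} (J : Ideal (MvPolynomial σ K)) (u : σ →₀ ℕ) : Prop :=
  ∀ S : Set (MvPolynomial σ K), IsBinomGenSet K J S → ∃ f ∈ S, u ∈ f.support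

/-- `f` is an indispensable binomial of `J`: every set of binomials generating `J` contains
`f` or `-f`. -/
def IndispBinomial {σ : Type*} (J : Ideal (MvPolynomial σ K)) (f : MvPolynomial σ K) : Prop :=
  ∀ S : Set (MvPolynomial σ K), IsBinomGenSet K J S → f ∈ S ∨ -f ∈ S

/-- `x^u - x^v` is a primitive binomial of `I_A`: it is a nonzero binomial of `I_A` and there is
no other nonzero binomial `x^{u'} - x^{v'} ∈ I_A` with `x^{u'} ∣ x^u` and `x^{v'} ∣ x^v`. -/
def IsPrimitive {n : ℕ} (a : Fin n → ℕ) (u v : Fin n →₀ ℕ) : Prop :=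
  u ≠ v ∧ (monomial u (1 : K) - monomial v (1 : K)) ∈ curveIdeal K a ∧
  ∀ u' v' : Fin n →₀ ℕ, u' ≤ u → v' ≤ v → u' ≠ v' →
    (monomial u' (1 : K) - monomial v' (1 : K)) ∈ curveIdeal K a → u' = u ∧ v' = v

/-!
Every nonzero binomial of `I_A` is divisible (monomial by monomial) by a primitive one, so no
binomial of `I_A` has `A`-degree below `d = deg_A f`; the binomials of `J` pull back to binomials
of `I_A` of the same degree. Hence two distinct exponent vectors of degree `d` with equal
`A`-degree share no variable, since cancelling a common variable would give a binomial below `d`.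
The bounds `u_i < c_i`, `u_k < c_k` force `u_j, u_l > 0`, so the only binomial of `J` with a
monomial dividing `x_i^{u_i} x_j^{u_j}` is `±f`. Writing `f` in terms of any binomial generating
set, some generator must contribute to the coefficient of `x_i^{u_i} x_j^{u_j}`, and that
generator is `±f`.
-/

section degN

variable {n : ℕ} (a : Fin n → ℕ)

lemma degN_eq_sum (u : Fin n →₀ ℕ) : degN a u = u.sum fun m e => e * a m := by
  rw [Finsupp.sum_fintype u (fun m e => e * a m) (by simp)]
  rfl

lemma degN_zero : degN a 0 = 0 := by
  simp [degN]

lemma degN_add (u v : Fin n →₀ ℕ) : degN a (u + v) = degN a u + degN a v := by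
  simp [degN, add_mul, Finset.sum_add_distrib]

lemma degN_single (m : Fin n) (e : ℕ) : degN a (single m e) = e * a m := by
  rw [degN_eq_sum, sum_single_index (zero_mul _)]

lemma degN_mono {u v : Fin n →₀ ℕ} (h : u ≤ v) : degN a u ≤ degN a v :=
  Finset.sum_le_sum fun m _ => Nat.mul_le_mul_right _ (h m)

lemma degN_lt_of_lt (ha : ∀ m, 0 < a m) {u v : Fin n →₀ ℕ} (h : u < v) :
    degN a u < degN a v := by
  obtain ⟨m, hm⟩ : ∃ m, u m < v m := by
    by_contra! h'
    exact h.ne (Finsupp.ext fun m => (h.le m).antisymm (h' m))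
  exact Finset.sum_lt_sum (fun m _ => Nat.mul_le_mul_right _ (h.le m))
    ⟨m, Finset.mem_univ m, Nat.mul_lt_mul_of_pos_right hm (ha m)⟩

lemma eq_zero_of_degN_eq_zero (ha : ∀ m, 0 < a m) {u : Fin n →₀ ℕ} (h : degN a u = 0) :
    u = 0 := by
  by_contra hu
  have := degN_lt_of_lt a ha (pos_iff_ne_zero.2 hu)
  rw [degN_zero] at this
  omega

lemma degN_mapDomain {m : ℕ} (g : Fin m → Fin n) (p : Fin m →₀ ℕ) :
    degN a (mapDomain g p) = degN (a ∘ g) p := by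
  rw [degN_eq_sum, sum_mapDomain_index (fun _ => zero_mul _) (fun _ _ _ => add_mul _ _ _),
    degN_eq_sum]
  rfl

end degN

section curveIdeal

variable {n : ℕ} (a : Fin n → ℕ)

lemma aeval_X_pow_monomial (u : Fin n →₀ ℕ) :
    aeval (fun m => (Polynomial.X : Polynomial K) ^ a m) (monomial u (1 : K)) =
      Polynomial.X ^ degN a u := by
  rw [aeval_monomial, map_one, one_mul, degN_eq_sum, Finsupp.prod, Finsupp.sum,
    ← Finset.prod_pow_eq_pow_sum]
  exact Finset.prod_congr rfl fun m _ => by rw [← pow_mul, mul_comm]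

lemma curveIdeal_le_ker :
    curveIdeal K a ≤ RingHom.ker (aeval fun m => (Polynomial.X : Polynomial K) ^ a m) := by
  rw [curveIdeal, Ideal.span_le]
  rintro f ⟨u, v, huv, rfl⟩
  simp only [SetLike.mem_coe, RingHom.mem_ker, map_sub, aeval_X_pow_monomial, huv, sub_self]

lemma monomial_sub_monomial_mem_curveIdeal_iff {u v : Fin n →₀ ℕ} :
    monomial u (1 : K) - monomial v (1 : K) ∈ curveIdeal K a ↔ degN a u = degN a v := by
  refine ⟨fun h => ?_, fun h => Ideal.subset_span ⟨u, v, h, rfl⟩⟩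
  have h0 := curveIdeal_le_ker K a h
  rw [RingHom.mem_ker, map_sub, aeval_X_pow_monomial, aeval_X_pow_monomial, sub_eq_zero] at h0
  simpa using congrArg Polynomial.natDegree h0

/-- Minimal pairs for the componentwise order are primitive. -/
lemma exists_isPrimitive_le {u v : Fin n →₀ ℕ} (huv : u ≠ v) (h : degN a u = degN a v) :
    ∃ p q, p ≤ u ∧ q ≤ v ∧ IsPrimitive K a p q := by
  obtain ⟨⟨p, q⟩, hle, ⟨hpq, hmem⟩, hmin⟩ := exists_minimal_le_of_wellFoundedLT
    (fun w : (Fin n →₀ ℕ) × (Fin n →₀ ℕ) =>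
      w.1 ≠ w.2 ∧ monomial w.1 (1 : K) - monomial w.2 (1 : K) ∈ curveIdeal K a)
    (u, v) ⟨huv, (monomial_sub_monomial_mem_curveIdeal_iff K a).2 h⟩
  refine ⟨p, q, hle.1, hle.2, hpq, hmem, fun p' q' hp' hq' hpq' hmem' => ?_⟩
  have hge := hmin (y := (p', q')) ⟨hpq', hmem'⟩ ⟨hp', hq'⟩
  exact ⟨(hge.1).antisymm' hp', (hge.2).antisymm' hq'⟩

end curveIdeal

lemma IsCritExp.mul_ne_degN {n : ℕ} {a : Fin n → ℕ} {i : Fin n} {c m : ℕ}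
    (hc : IsCritExp a i c) (hm : 0 < m) (hmc : m < c) {w : Fin n →₀ ℕ} (hw : w i = 0) :
    m * a i ≠ degN a w :=
  fun h => (hc.2 ⟨hm, w, hw, h⟩).not_gt hmc

/-- By `monomial_sub_monomial_mem_curveIdeal_iff`, the pairs `p ≠ q` of equal `A`-degree are the
nonzero binomials `x^p - x^q` of `I_A`. -/
def NoBinomialBelow {n : ℕ} (a : Fin n → ℕ) (d : ℕ) : Prop :=
  ∀ p q : Fin n →₀ ℕ, p ≠ q → degN a p = degN a q → d ≤ degN a p

lemma noBinomialBelow_of_forall_isPrimitive {n : ℕ} (a : Fin n → ℕ) {d : ℕ}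
    (h : ∀ u v : Fin n →₀ ℕ, IsPrimitive K a u v → d ≤ degN a u) :
    NoBinomialBelow a d := by
  intro p q hpq hdeg
  obtain ⟨p', q', hp', -, hprim⟩ := exists_isPrimitive_le K a hpq hdeg
  exact (h p' q' hprim).trans (degN_mono a hp')

namespace NoBinomialBelow

variable {n : ℕ} {a : Fin n → ℕ} {d : ℕ}

lemma comp (h : NoBinomialBelow a d) {m : ℕ} {g : Fin m → Fin n} (hg : Function.Injective g) :
    NoBinomialBelow (a ∘ g) d := by
  intro p q hpq hdeg
  simp only [← degN_mapDomain] at hdeg ⊢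
  exact h _ _ (fun h' => hpq (mapDomain_injective hg h')) hdeg

lemma eq_of_le (h : NoBinomialBelow a d) (ha : ∀ m, 0 < a m) {u p q : Fin n →₀ ℕ}
    (hu : degN a u = d) (hpu : p ≤ u) (hpq : p ≠ q) (hdeg : degN a p = degN a q) : p = u := by
  by_contra hne
  have := degN_lt_of_lt a ha (lt_of_le_of_ne hpu hne)
  have := h p q hpq hdeg
  omega

/-- Cancelling a common variable of `x^p` and `x^q` would leave a binomial of degree below `d`. -/
lemma eq_zero_or_eq_zero (h : NoBinomialBelow a d) (ha : ∀ m, 0 < a m) {p q : Fin n →₀ ℕ}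
    (hpq : p ≠ q) (hdeg : degN a p = degN a q) (hp : degN a p = d) (m : Fin n) :
    p m = 0 ∨ q m = 0 := by
  by_contra! hpos
  have hcancel : ∀ r : Fin n →₀ ℕ, r m ≠ 0 → r - single m 1 + single m 1 = r :=
    fun r hr => tsub_add_cancel_of_le (single_le_iff.2 (Nat.pos_of_ne_zero hr))
  have hsplit : ∀ r : Fin n →₀ ℕ, r m ≠ 0 → degN a r = degN a (r - single m 1) + a m :=
    fun r hr => by rw [← one_mul (a m), ← degN_single, ← degN_add, hcancel r hr]
  have hne : p - single m 1 ≠ q - single m 1 := fun h' =>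
    hpq (by rw [← hcancel p hpos.1, ← hcancel q hpos.2, h'])
  have := h _ _ hne (by have := hsplit p hpos.1; have := hsplit q hpos.2; omega)
  have := hsplit p hpos.1
  have := ha m
  omega

/-- Here `p = u`, and `q` shares no variable with `u`, nor with `v` unless `q = v`; so `q = 0`. -/
lemma eq_and_eq_of_le (h : NoBinomialBelow a d) (ha : ∀ m, 0 < a m) {u v p q : Fin n →₀ ℕ}
    (huv : u ≠ v) (hdeg_uv : degN a u = degN a v) (hu : degN a u = d)
    (hcover : ∀ m, u m ≠ 0 ∨ v m ≠ 0) (hpq : p ≠ q) (hdeg : degN a p = degN a q)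
    (hpu : p ≤ u) : p = u ∧ q = v := by
  obtain rfl := h.eq_of_le ha hu hpu hpq hdeg
  refine ⟨rfl, ?_⟩
  by_contra hqv
  have hq0 : q = 0 := Finsupp.ext fun m => by
    have := h.eq_zero_or_eq_zero ha hpq hdeg hu m
    have := h.eq_zero_or_eq_zero ha hqv (hdeg.symm.trans hdeg_uv) (hdeg.symm.trans hu) m
    have := hcover m
    simp only [Finsupp.coe_zero, Pi.zero_apply]
    tauto
  have hp0 : p = 0 := eq_zero_of_degN_eq_zero a ha (by rw [hdeg, hq0, degN_zero])
  have hv0 : v = 0 := eq_zero_of_degN_eq_zero a ha (by rw [← hdeg_uv, hp0, degN_zero])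
  exact huv (hp0.trans hv0.symm)

end NoBinomialBelow

/-- Every binomial generating set must produce the coefficient of `x^u` in `f`, which only a
binomial with a monomial dividing `x^u` can do. -/
lemma indispBinomial_of_forall_le {σ : Type*} {J : Ideal (MvPolynomial σ K)} {u v : σ →₀ ℕ}
    (hf : monomial u (1 : K) - monomial v (1 : K) ∈ J) (huv : u ≠ v)
    (h : ∀ p q : σ →₀ ℕ, monomial p (1 : K) - monomial q (1 : K) ∈ J → p ≠ q →
      p ≤ u → p = u ∧ q = v) :
    IndispBinomial K J (monomial u (1 : K) - monomial v (1 : K)) := by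
  classical
  rintro S ⟨hSbinom, rfl⟩
  obtain ⟨c, hcS, hsum⟩ := Submodule.mem_span_set.1 hf
  have hcoeff : coeff u (c.sum fun g r => r • g) ≠ 0 := by
    rw [hsum, coeff_sub, coeff_monomial, coeff_monomial, if_pos rfl, if_neg huv.symm]
    simp
  rw [Finsupp.sum, coeff_sum] at hcoeff
  obtain ⟨g, hgc, hgu⟩ := Finset.exists_ne_zero_of_sum_ne_zero hcoeff
  have hgS : g ∈ S := hcS hgc
  obtain ⟨p, q, rfl⟩ := hSbinom g hgS
  have hgJ : monomial p (1 : K) - monomial q 1 ∈ Ideal.span S := Ideal.subset_span hgS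
  have hpq : p ≠ q := by
    rintro rfl
    simp at hgu
  rw [smul_eq_mul, mul_sub, coeff_sub, coeff_mul_monomial', coeff_mul_monomial'] at hgu
  by_cases hpu : p ≤ u
  · obtain ⟨rfl, rfl⟩ := h p q hgJ hpq hpu
    exact Or.inl hgS
  · have hqu : q ≤ u := by
      by_contra hqu
      simp [hpu, hqu] at hgu
    have hgJ' := (Ideal.span S).neg_mem hgJ
    rw [neg_sub] at hgJ'
    obtain ⟨rfl, rfl⟩ := h q p hgJ' hpq.symm hqu
    exact Or.inr (by rwa [neg_sub])

lemma indispBinomial_of_noBinomialBelow {m : ℕ} {b : Fin m → ℕ} (hb : ∀ x, 0 < b x)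
    {u v : Fin m →₀ ℕ} (h : NoBinomialBelow b (degN b u)) (huv : u ≠ v)
    (hdeg : degN b u = degN b v) (hcover : ∀ x, u x ≠ 0 ∨ v x ≠ 0) :
    IndispBinomial K (curveIdeal K b) (monomial u (1 : K) - monomial v (1 : K)) := by
  refine indispBinomial_of_forall_le K ((monomial_sub_monomial_mem_curveIdeal_iff K b).2 hdeg) huv
    fun p q hmem hpq hpu => ?_
  exact h.eq_and_eq_of_le hb huv hdeg rfl hcover hpq
    ((monomial_sub_monomial_mem_curveIdeal_iff K b).1 hmem) hpu

theorem statement16 {n : ℕ} (a c : Fin n → ℕ) (ha : ∀ i, 0 < a i)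
    (hc : ∀ i, IsCritExp a i (c i))
    (i j k l : Fin n) (hij : i ≠ j) (hik : i ≠ k) (hil : i ≠ l) (hjk : j ≠ k)
    (hjl : j ≠ l) (hkl : k ≠ l) (ui uj uk ul : ℕ)
    (hprim : IsPrimitive K a (Finsupp.single i ui + Finsupp.single j uj)
      (Finsupp.single k uk + Finsupp.single l ul))
    (hi0 : 0 < ui) (hi : ui < c i) (hk0 : 0 < uk) (hk : uk < c k)
    (hmin : ∀ u' v' : Fin n →₀ ℕ, IsPrimitive K a u' v' →
      ui * a i + uj * a j ≤ degN a u') :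
    IndispBinomial K (curveIdeal K ![a i, a j, a k, a l])
      (monomial (Finsupp.single (0 : Fin 4) ui + Finsupp.single (1 : Fin 4) uj) (1 : K) -
        monomial (Finsupp.single (2 : Fin 4) uk + Finsupp.single (3 : Fin 4) ul) (1 : K)) := by
  have hdeg : ui * a i + uj * a j = uk * a k + ul * a l := by
    simpa only [degN_add, degN_single] using
      (monomial_sub_monomial_mem_curveIdeal_iff K a).1 hprim.2.1
  have huj : 0 < uj := Nat.pos_of_ne_zero fun huj =>
    (hc i).mul_ne_degN hi0 hi (w := single k uk + single l ul) (by simp [hik.symm, hil.symm])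
      (by simp [degN_add, degN_single, ← hdeg, huj])
  have hul : 0 < ul := Nat.pos_of_ne_zero fun hul =>
    (hc k).mul_ne_degN hk0 hk (w := single i ui + single j uj) (by simp [hik, hjk])
      (by simp [degN_add, degN_single, hdeg, hul])
  have hb : ![a i, a j, a k, a l] = a ∘ ![i, j, k, l] := by
    ext x
    fin_cases x <;> rfl
  have hinj : Function.Injective ![i, j, k, l] := by
    intro x y hxy
    fin_cases x <;> fin_cases y <;> simp_all [eq_comm]
  have hgap : NoBinomialBelow ![a i, a j, a k, a l] (ui * a i + uj * a j) := by
    rw [hb]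
    exact (noBinomialBelow_of_forall_isPrimitive K a hmin).comp hinj
  refine indispBinomial_of_noBinomialBelow K (by rw [hb]; exact fun x => ha _)
    (by simpa [degN_add, degN_single] using hgap) ?_
    (by simpa [degN_add, degN_single] using hdeg) ?_
  · intro h
    simpa [hi0.ne'] using DFunLike.congr_fun h 0
  · intro x
    fin_cases x <;> simp <;> omega
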